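/- Let N ≥ 1 and m ≥ 1. For every closed cube Q ⊂ ℝ^N with sides parallel to the axes, side length ℓ(Q) and center x_Q, there exists a function φ_Q ∈ C^∞(ℝ^N × ℝ^N) with the following properties: (i) for each x ∈ ℝ^N, the function y ↦ φ_Q(x,y) is supported in the interior of Q; (ii) for every f ∈ L^1(Q), the function x ↦ ∫_Q f(y) φ_Q(x,y) dy is a polynomial of degree at most m−1; (iii) P(x) = ∫ P(y) φ_Q(x,y) dy for every x ∈ ℝ^N and every polynomial P of degree at most m−1; (iv) for every a > 0 and all multi-indices α, β there is a constant C_{m,a,α,β} > 0, independent of Q, such that |∂_x^α ∂_y^β φ_Q(x,y)| ≤ C_{m,a,α,β} ℓ(Q)^{−N−|α|−|β|} for all y ∈ ℝ^N and all x in the cube with center x_Q and side length a·ℓ(Q). -/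

import Mathlib

/-!
On `ℝ`, a bump `ψ` supported in `(-1/4, 1/4)` makes the Gram matrix `(∫ t ^ (j + k) ψ t)_{j,k<m}`
positive definite, and inverting it yields functions `u_k = p_k ψ` with `∫ t ^ j u_k t = δ_{jk}`.
The tensor products `U_γ z = ∏ i, u_{γ i} (z i)` are then dual to the monomials `z ^ β`, `|β| < m`,
and the kernel is
`φ_Q x y = ℓ ^ (-N) ∑_{|γ| < m} ((x - x_Q) / ℓ) ^ γ U_γ ((y - x_Q) / ℓ)`.
Reproduction of polynomials is this biorthogonality after the change of variables
`y = x_Q + ℓ z`. Each derivative of a rescaled function costs a factor `ℓ⁻¹`, so the bounds come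
from bounds on the fixed functions `∂^α z ^ γ` over a cube and `∂^β U_γ` over all of `ℝ^N`.
-/

open MeasureTheory Set Metric Filter
open scoped ENNReal NNReal Topology

noncomputable section

abbrev RN (N : ℕ) := EuclideanSpace ℝ (Fin N)

variable {N : ℕ}

/-- Partial derivative in the `i`-th coordinate direction. -/
def pd {E : Type*} [NormedAddCommGroup E] [NormedSpace ℝ E] (i : Fin N)
    (f : RN N → E) : RN N → E :=
  fun x => fderiv ℝ f x (EuclideanSpace.single i 1)

/-- Multi-index partial derivative `∂^α`. -/
def md {E : Type*} [NormedAddCommGroup E] [NormedSpace ℝ E] (α : Fin N → ℕ)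
    (f : RN N → E) : RN N → E :=
  ((List.ofFn fun i : Fin N => (pd i)^[α i]).foldr (· ∘ ·) id) f

/-- Order `|α|` of a multi-index. -/
def mOrder (α : Fin N → ℕ) : ℕ := ∑ i, α i

/-- Multi-indices of order at most `k`. -/
def idxLe (N k : ℕ) : Finset (Fin N → ℕ) :=
  (Fintype.piFinset fun _ : Fin N => Finset.range (k + 1)).filter fun α => mOrder α ≤ k

/-- Multi-indices of order exactly `k`. -/
def idxEq (N k : ℕ) : Finset (Fin N → ℕ) :=
  (Fintype.piFinset fun _ : Fin N => Finset.range (k + 1)).filter fun α => mOrder α = k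

/-- The dilate `φ_t(z) = t^{-N} φ(z/t)`. -/
def dil (φ : RN N → ℝ) (t : ℝ) (z : RN N) : ℝ := φ (t⁻¹ • z) / t ^ N

/-- Convolution `(u * φ_t)(x)`. -/
def convAt (φ : RN N → ℝ) (t : ℝ) (u : RN N → ℂ) (x : RN N) : ℂ :=
  ∫ y, dil φ t (x - y) • u y

/-- The small maximal function `sup_{0<t<1} |(u * φ_t)(x)|`. -/
def smallMax (φ : RN N → ℝ) (u : RN N → ℂ) (x : RN N) : ℝ≥0∞ :=
  ⨆ t ∈ Ioo (0 : ℝ) 1, ENNReal.ofReal ‖convAt φ t u x‖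

/-- The localizable Hardy space quasi-norm `‖u‖_{h^p}` (for `0 < p < ∞`). -/
def hNorm (φ : RN N → ℝ) (p : ℝ) (u : RN N → ℂ) : ℝ≥0∞ :=
  (∫⁻ x, smallMax φ u x ^ p) ^ (1 / p)

/-- A fixed radial nonnegative smooth function supported in the unit ball with integral 1. -/
structure GoodPhi (φ : RN N → ℝ) : Prop where
  smooth : ContDiff ℝ (⊤ : ℕ∞) φ
  nonneg : ∀ x, 0 ≤ φ x
  radial : ∀ x y : RN N, ‖x‖ = ‖y‖ → φ x = φ y
  supp : tsupport φ ⊆ closedBall 0 1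
  int_one : ∫ x, φ x = 1

/-- The closed axes-parallel cube with center `c` and side length `ℓ`. -/
def cube (c : RN N) (ℓ : ℝ) : Set (RN N) := {y | ∀ i, |y i - c i| ≤ ℓ / 2}

/-- The open axes-parallel cube with center `c` and side length `ℓ`
(the interior of `cube c ℓ` when `ℓ > 0`). -/
def openCube (c : RN N) (ℓ : ℝ) : Set (RN N) := {y | ∀ i, |y i - c i| < ℓ / 2}

/-- `P` is a (complex) polynomial in `N` variables of degree at most `d`. -/
def IsPolyDegLE (N d : ℕ) (P : RN N → ℂ) : Prop :=
  ∃ c : (Fin N → ℕ) → ℂ, ∀ x : RN N, P x = ∑ α ∈ idxLe N d, c α * ∏ i, ((x i : ℝ) : ℂ) ^ α i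

open scoped ContDiff

section MomentGram

open Matrix

lemma exists_mem_sum_mul_pow_ne_zero {U : Set ℝ} (hU : IsOpen U) (hUne : U.Nonempty) {m : ℕ}
    {x : Fin m → ℝ} (hx : x ≠ 0) : ∃ t ∈ U, ∑ j, x j * t ^ (j : ℕ) ≠ 0 := by
  by_contra! hvanish
  set p : Polynomial ℝ := ∑ j, Polynomial.C (x j) * Polynomial.X ^ (j : ℕ)
  have hroots : U ⊆ {t | p.IsRoot t} := fun t ht => by
    simpa [p, Polynomial.eval_finsetSum] using hvanish t ht
  obtain ⟨t₀, ht₀⟩ := hUne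
  have hp : p = 0 := p.eq_zero_of_infinite_isRoot
    ((infinite_of_mem_nhds t₀ (hU.mem_nhds ht₀)).mono hroots)
  refine hx (funext fun j => ?_)
  simpa [p, Polynomial.finsetSum_coeff, Polynomial.coeff_C_mul_X_pow, Fin.val_inj]
    using congrArg (Polynomial.coeff · j) hp

variable {ψ : ℝ → ℝ}

lemma integrable_pow_mul_of_hasCompactSupport (hψ : Continuous ψ) (hψc : HasCompactSupport ψ)
    (r : ℕ) : Integrable fun t => t ^ r * ψ t :=
  ((continuous_pow r).mul hψ).integrable_of_hasCompactSupport hψc.mul_left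

variable (ψ) in
def momentGram (m : ℕ) : Matrix (Fin m) (Fin m) ℝ := fun j k => ∫ t, t ^ (j + k : ℕ) * ψ t

lemma dotProduct_momentGram_mulVec (hψ : Continuous ψ) (hψc : HasCompactSupport ψ) {m : ℕ}
    (x : Fin m → ℝ) :
    x ⬝ᵥ (momentGram ψ m *ᵥ x) = ∫ t, (∑ j, x j * t ^ (j : ℕ)) ^ 2 * ψ t := by
  have hexpand : ∀ t : ℝ, (∑ j, x j * t ^ (j : ℕ)) ^ 2 * ψ t
      = ∑ j, ∑ k, x j * x k * (t ^ (j + k : ℕ) * ψ t) := fun t => by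
    rw [sq, Finset.sum_mul_sum, Finset.sum_mul]
    exact Finset.sum_congr rfl fun _ _ => by
      rw [Finset.sum_mul]; exact Finset.sum_congr rfl fun _ _ => by rw [pow_add]; ring
  have hint := integrable_pow_mul_of_hasCompactSupport hψ hψc
  simp_rw [hexpand]
  rw [integral_finsetSum _ fun j _ => integrable_finsetSum _ fun k _ => (hint _).const_mul _]
  simp_rw [integral_finsetSum _ fun k _ => (hint _).const_mul _, integral_const_mul]
  simp only [dotProduct, mulVec, momentGram, Finset.mul_sum]
  exact Finset.sum_congr rfl fun _ _ => Finset.sum_congr rfl fun _ _ => by ring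

lemma momentGram_posDef (hψ : Continuous ψ) (hψc : HasCompactSupport ψ) (hψ0 : 0 ≤ ψ)
    (hψpos : ∃ t, 0 < ψ t) (m : ℕ) : (momentGram ψ m).PosDef := by
  refine posDef_iff_dotProduct_mulVec.mpr ⟨?_, fun x hx => ?_⟩
  · ext j k
    simp [momentGram, add_comm]
  · obtain ⟨t, ht, hne⟩ :=
      exists_mem_sum_mul_pow_ne_zero (hψ.isOpen_preimage _ isOpen_Ioi) hψpos hx
    rw [star_trivial, dotProduct_momentGram_mulVec hψ hψc]
    refine Continuous.integral_pos_of_hasCompactSupport_nonneg_nonzero (x := t) (by fun_prop)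
      hψc.mul_left (fun t => mul_nonneg (sq_nonneg _) (hψ0 t)) ?_
    exact mul_ne_zero (pow_ne_zero 2 hne) ht.ne'

variable (ψ) in
/-- Indexed by `k : ℕ` so that entries of multi-indices can be plugged in; zero for `k ≥ m`. -/
def dualWeight (m k : ℕ) (t : ℝ) : ℝ :=
  (∑ l : Fin m, ((momentGram ψ m)⁻¹ *ᵥ fun j => if (j : ℕ) = k then 1 else 0) l * t ^ (l : ℕ)) *
    ψ t

lemma integral_pow_mul_dualWeight (hψ : Continuous ψ) (hψc : HasCompactSupport ψ) (hψ0 : 0 ≤ ψ)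
    (hψpos : ∃ t, 0 < ψ t) {m : ℕ} (j : Fin m) (k : ℕ) :
    ∫ t, t ^ (j : ℕ) * dualWeight ψ m k t = if (j : ℕ) = k then 1 else 0 := by
  set e : Fin m → ℝ := fun j => if (j : ℕ) = k then 1 else 0
  have hint := integrable_pow_mul_of_hasCompactSupport hψ hψc
  have hexpand : ∀ t : ℝ, t ^ (j : ℕ) * dualWeight ψ m k t
      = ∑ l, ((momentGram ψ m)⁻¹ *ᵥ e) l * (t ^ (j + l : ℕ) * ψ t) := fun t => by
    simp only [dualWeight, Finset.sum_mul, Finset.mul_sum, pow_add]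
    exact Finset.sum_congr rfl fun _ _ => by ring
  have hdet : IsUnit (momentGram ψ m).det :=
    isUnit_iff_ne_zero.mpr (PosDef.det_pos (momentGram_posDef hψ hψc hψ0 hψpos m)).ne'
  simp_rw [hexpand]
  rw [integral_finsetSum _ fun l _ => (hint _).const_mul _]
  simp_rw [integral_const_mul]
  calc ∑ l, ((momentGram ψ m)⁻¹ *ᵥ e) l * ∫ t, t ^ (j + l : ℕ) * ψ t
      = (momentGram ψ m *ᵥ ((momentGram ψ m)⁻¹ *ᵥ e)) j := by
        simp only [mulVec, dotProduct, momentGram, mul_comm]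
    _ = e j := by rw [mulVec_mulVec, mul_nonsing_inv _ hdet, one_mulVec]

end MomentGram

lemma contDiff_dualWeight {ψ : ℝ → ℝ} (hψ : ContDiff ℝ ∞ ψ) (m k : ℕ) :
    ContDiff ℝ ∞ (dualWeight ψ m k) :=
  (ContDiff.sum fun _ _ => contDiff_const.mul (contDiff_id.pow _)).mul hψ

lemma dualWeight_eq_zero {ψ : ℝ → ℝ} {t : ℝ} (ht : ψ t = 0) (m k : ℕ) :
    dualWeight ψ m k t = 0 := by
  simp [dualWeight, ht]

def unitBump : ContDiffBump (0 : ℝ) := ⟨1 / 8, 1 / 4, by norm_num, by norm_num⟩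

lemma unitBump_eq_zero {t : ℝ} (ht : 1 / 4 ≤ |t|) : unitBump t = 0 := by
  rw [← Function.notMem_support, unitBump.support_eq, mem_ball, Real.dist_eq, sub_zero, not_lt]
  exact ht

lemma integral_pow_mul_dualWeight_unitBump {m : ℕ} (j : Fin m) (k : ℕ) :
    ∫ t, t ^ (j : ℕ) * dualWeight unitBump m k t = if (j : ℕ) = k then 1 else 0 :=
  integral_pow_mul_dualWeight unitBump.continuous unitBump.hasCompactSupport
    (fun _ => unitBump.nonneg) ⟨0, unitBump.pos_of_mem_ball (mem_ball_self unitBump.rOut_pos)⟩ j k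

lemma isCompact_cube (c : RN N) (ℓ : ℝ) : IsCompact (cube c ℓ) := by
  have : cube c ℓ = PiLp.homeomorph 2 (fun _ : Fin N => ℝ) ⁻¹'
      Set.pi univ fun i => Icc (c i - ℓ / 2) (c i + ℓ / 2) := by
    ext y
    change (∀ i, |y i - c i| ≤ ℓ / 2) ↔ ∀ i ∈ univ, y i ∈ Icc (c i - ℓ / 2) (c i + ℓ / 2)
    simp only [mem_univ, true_implies, mem_Icc, abs_sub_le_iff]
    exact forall_congr' fun i => by constructor <;> rintro ⟨h₁, h₂⟩ <;> constructor <;> linarith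
  rw [this, Homeomorph.isCompact_preimage]
  exact isCompact_univ_pi fun _ => isCompact_Icc

lemma isClosed_cube (c : RN N) (ℓ : ℝ) : IsClosed (cube c ℓ) :=
  (isCompact_cube c ℓ).isClosed

lemma cube_half_subset_openCube (c : RN N) {ℓ : ℝ} (hℓ : 0 < ℓ) :
    cube c (ℓ / 2) ⊆ openCube c ℓ :=
  fun _ hy i => (hy i).trans_lt (by linarith)

lemma EuclideanSpace.integral_prod {ι 𝕜 : Type*} [Fintype ι] [RCLike 𝕜] (f : ι → ℝ → 𝕜) :
    ∫ x : EuclideanSpace ℝ ι, ∏ i, f i (x i) = ∏ i, ∫ t, f i t := by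
  rw [← (PiLp.volume_preserving_toLp ι).integral_comp
    (MeasurableEquiv.toLp 2 (ι → ℝ)).measurableEmbedding]
  exact integral_fintype_prod_volume_eq_prod f

section IsPolyDegLE

variable {d e : ℕ} {P Q : RN N → ℂ}

def monomialFn (α : Fin N → ℕ) (x : RN N) : ℂ := ∏ i, ((x i : ℝ) : ℂ) ^ α i

lemma contDiff_monomialFn (α : Fin N → ℕ) : ContDiff ℝ ∞ (monomialFn α) :=
  contDiff_prod fun i _ =>
    (Complex.ofRealCLM.contDiff.comp (EuclideanSpace.proj i).contDiff).pow (α i)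

lemma monomialFn_add (α β : Fin N → ℕ) (x : RN N) :
    monomialFn (α + β) x = monomialFn α x * monomialFn β x := by
  simp only [monomialFn, Pi.add_apply, pow_add, Finset.prod_mul_distrib]

lemma mem_idxLe {α : Fin N → ℕ} : α ∈ idxLe N d ↔ mOrder α ≤ d := by
  refine ⟨fun h => (Finset.mem_filter.mp h).2, fun h => Finset.mem_filter.mpr ⟨?_, h⟩⟩
  refine Fintype.mem_piFinset.mpr fun i => Finset.mem_range_succ_iff.mpr (le_trans ?_ h)
  exact Finset.single_le_sum (fun j _ => Nat.zero_le (α j)) (Finset.mem_univ i)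

lemma le_of_mem_idxLe {α : Fin N → ℕ} (hα : α ∈ idxLe N d) (i : Fin N) : α i ≤ d :=
  (Finset.single_le_sum (fun j _ => Nat.zero_le (α j)) (Finset.mem_univ i)).trans
    (mem_idxLe.mp hα)

lemma isPolyDegLE_zero : IsPolyDegLE N d 0 := ⟨0, by simp⟩

lemma IsPolyDegLE.add (hP : IsPolyDegLE N d P) (hQ : IsPolyDegLE N d Q) :
    IsPolyDegLE N d (P + Q) := by
  obtain ⟨c, hc⟩ := hP
  obtain ⟨c', hc'⟩ := hQ
  exact ⟨c + c', fun x => by simp [hc x, hc' x, add_mul, Finset.sum_add_distrib]⟩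

lemma IsPolyDegLE.const_mul (k : ℂ) (hP : IsPolyDegLE N d P) :
    IsPolyDegLE N d fun x => k * P x := by
  obtain ⟨c, hc⟩ := hP
  exact ⟨k • c, fun x => by simp [hc x, Finset.mul_sum, mul_assoc]⟩

lemma IsPolyDegLE.sum {ι : Type*} (s : Finset ι) {P : ι → RN N → ℂ}
    (h : ∀ i ∈ s, IsPolyDegLE N d (P i)) : IsPolyDegLE N d fun x => ∑ i ∈ s, P i x := by
  simpa only [← Finset.sum_apply] using
    Finset.sum_induction P (IsPolyDegLE N d) (fun _ _ => IsPolyDegLE.add) isPolyDegLE_zero h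

lemma isPolyDegLE_monomialFn {α : Fin N → ℕ} (hα : mOrder α ≤ d) :
    IsPolyDegLE N d (monomialFn α) :=
  ⟨fun β => if β = α then 1 else 0, fun x => by simp [mem_idxLe.mpr hα, monomialFn]⟩

lemma isPolyDegLE_const (k : ℂ) : IsPolyDegLE N d fun _ => k := by
  have hone : IsPolyDegLE N d (monomialFn 0) := isPolyDegLE_monomialFn (by simp [mOrder])
  simpa [monomialFn] using hone.const_mul k

lemma IsPolyDegLE.of_le (hP : IsPolyDegLE N d P) (hde : d ≤ e) : IsPolyDegLE N e P := by
  obtain ⟨c, hc⟩ := hP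
  rw [funext hc]
  exact .sum _ fun α hα => (isPolyDegLE_monomialFn ((mem_idxLe.mp hα).trans hde)).const_mul (c α)

lemma IsPolyDegLE.mul (hP : IsPolyDegLE N d P) (hQ : IsPolyDegLE N e Q) :
    IsPolyDegLE N (d + e) fun x => P x * Q x := by
  obtain ⟨c, hc⟩ := hP
  obtain ⟨c', hc'⟩ := hQ
  have hexpand : (fun x => P x * Q x) = fun x => ∑ α ∈ idxLe N d, ∑ β ∈ idxLe N e,
      c α * c' β * monomialFn (α + β) x := funext fun x => by
    simp only [hc x, hc' x, Finset.sum_mul_sum, monomialFn_add]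
    exact Finset.sum_congr rfl fun _ _ => Finset.sum_congr rfl fun _ _ => by
      simp only [monomialFn]; ring
  rw [hexpand]
  refine .sum _ fun α hα => .sum _ fun β hβ => .const_mul _ (isPolyDegLE_monomialFn ?_)
  simpa [mOrder, Finset.sum_add_distrib] using add_le_add (mem_idxLe.mp hα) (mem_idxLe.mp hβ)

lemma IsPolyDegLE.prod {ι : Type*} (s : Finset ι) {P : ι → RN N → ℂ} {d : ι → ℕ}
    (h : ∀ i ∈ s, IsPolyDegLE N (d i) (P i)) :
    IsPolyDegLE N (∑ i ∈ s, d i) fun x => ∏ i ∈ s, P i x := by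
  classical
  induction s using Finset.induction_on with
  | empty => simpa using isPolyDegLE_const 1
  | insert a s ha ih =>
    simp only [Finset.sum_insert ha, Finset.prod_insert ha]
    exact (h a (Finset.mem_insert_self a s)).mul (ih fun i hi => h i (Finset.mem_insert_of_mem hi))

lemma IsPolyDegLE.pow (hP : IsPolyDegLE N d P) (k : ℕ) :
    IsPolyDegLE N (k * d) fun x => P x ^ k := by
  simpa using IsPolyDegLE.prod (Finset.range k) fun _ _ => hP

lemma isPolyDegLE_affine_coord (i : Fin N) (r b : ℝ) :
    IsPolyDegLE N 1 fun x => ((r * x i + b : ℝ) : ℂ) := by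
  have hlin : IsPolyDegLE N 1 (monomialFn (Pi.single i 1)) :=
    isPolyDegLE_monomialFn (by simp [mOrder])
  convert (hlin.const_mul r).add (isPolyDegLE_const b) using 1
  ext x
  simp [monomialFn, Pi.single_apply]

lemma IsPolyDegLE.comp_smul_add (hP : IsPolyDegLE N d P) (r : ℝ) (b : RN N) :
    IsPolyDegLE N d fun x => P (r • x + b) := by
  obtain ⟨c, hc⟩ := hP
  simp only [hc]
  refine .sum _ fun α hα => .const_mul _ (IsPolyDegLE.of_le ?_ (mem_idxLe.mp hα))
  simpa [mOrder, monomialFn] using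
    IsPolyDegLE.prod Finset.univ fun i _ => (isPolyDegLE_affine_coord i r (b i)).pow (α i)

end IsPolyDegLE

def unitDual (m : ℕ) (γ : Fin N → ℕ) (z : RN N) : ℂ :=
  ∏ i, (dualWeight unitBump m (γ i) (z i) : ℂ)

lemma contDiff_unitDual (m : ℕ) (γ : Fin N → ℕ) : ContDiff ℝ ∞ (unitDual m γ) :=
  contDiff_prod fun i _ => Complex.ofRealCLM.contDiff.comp
    ((contDiff_dualWeight unitBump.contDiff m (γ i)).comp (EuclideanSpace.proj (𝕜 := ℝ) i).contDiff)

lemma mem_cube_of_unitDual_ne_zero {m : ℕ} {γ : Fin N → ℕ} {z : RN N}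
    (hz : unitDual m γ z ≠ 0) : z ∈ cube 0 (1 / 2) := by
  intro i
  by_contra! hi
  refine hz (Finset.prod_eq_zero (Finset.mem_univ i) ?_)
  rw [dualWeight_eq_zero (unitBump_eq_zero (by norm_num at hi; linarith)), Complex.ofReal_zero]

lemma hasCompactSupport_unitDual (m : ℕ) (γ : Fin N → ℕ) : HasCompactSupport (unitDual m γ) :=
  .intro' (isCompact_cube 0 (1 / 2)) (isClosed_cube 0 (1 / 2))
    fun _ hz => not_imp_comm.mp mem_cube_of_unitDual_ne_zero hz

lemma integral_monomialFn_mul_unitDual {m : ℕ} {β : Fin N → ℕ} (hβ : ∀ i, β i < m)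
    (γ : Fin N → ℕ) :
    ∫ z, monomialFn β z * unitDual m γ z = if β = γ then 1 else 0 := by
  have hfactor : ∀ z : RN N, monomialFn β z * unitDual m γ z
      = ∏ i, (((z i) ^ β i * dualWeight unitBump m (γ i) (z i) : ℝ) : ℂ) := fun z => by
    simp only [monomialFn, unitDual, Complex.ofReal_mul, Complex.ofReal_pow,
      Finset.prod_mul_distrib]
  simp_rw [hfactor]
  rw [EuclideanSpace.integral_prod fun i t => ((t ^ β i * dualWeight unitBump m (γ i) t : ℝ) : ℂ)]
  simp_rw [integral_complex_ofReal]
  have hmoment := fun i => integral_pow_mul_dualWeight_unitBump (m := m) ⟨β i, hβ i⟩ (γ i)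
  simp only [hmoment, funext_iff]
  split_ifs with h
  · simp [h]
  · obtain ⟨i, hi⟩ := not_forall.mp h
    exact Finset.prod_eq_zero (Finset.mem_univ i) (by simp [hi])

section MultiDerivative

variable {E : Type*} [NormedAddCommGroup E] [NormedSpace ℝ E] {f g : RN N → E}

def pdList (L : List (Fin N)) (f : RN N → E) : RN N → E := L.foldr pd f

def idxList (α : Fin N → ℕ) : List (Fin N) := (List.ofFn fun i => List.replicate (α i) i).flatten

lemma length_idxList (α : Fin N → ℕ) : (idxList α).length = mOrder α := by
  simp [idxList, mOrder, List.sum_ofFn]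

lemma pdList_append (L L' : List (Fin N)) (f : RN N → E) :
    pdList (L ++ L') f = pdList L (pdList L' f) := by
  simp [pdList, List.foldr_append]

lemma md_eq_pdList (α : Fin N → ℕ) (f : RN N → E) : md α f = pdList (idxList α) f := by
  have hiterate : ∀ (i : Fin N) (k : ℕ) (g : RN N → E),
      (pd i)^[k] g = pdList (List.replicate k i) g := fun i k g => by
    induction k with
    | zero => rfl
    | succ k ih => rw [Function.iterate_succ_apply', ih, List.replicate_succ]; rfl
  have hfoldr : ∀ (K : List (List (Fin N))) (g : RN N → E),
      (K.map fun L => pdList (E := E) L).foldr (· ∘ ·) id g = pdList K.flatten g := by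
    intro K g
    induction K with
    | nil => rfl
    | cons L K ih =>
      rw [List.flatten_cons, pdList_append, ← ih]
      rfl
  have hops : (fun i => (pd (E := E) i)^[α i]) =
      (fun L => pdList L) ∘ fun i => List.replicate (α i) i :=
    funext fun i => funext (hiterate i (α i))
  rw [idxList, ← hfoldr, List.map_ofFn, md, hops]

lemma contDiff_pd (i : Fin N) (hf : ContDiff ℝ ∞ f) : ContDiff ℝ ∞ (pd i f) :=
  (hf.fderiv_right le_rfl).clm_apply contDiff_const

lemma contDiff_pdList (L : List (Fin N)) (hf : ContDiff ℝ ∞ f) : ContDiff ℝ ∞ (pdList L f) := by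
  induction L with
  | nil => exact hf
  | cons i L ih => exact contDiff_pd i ih

lemma contDiff_md (α : Fin N → ℕ) (hf : ContDiff ℝ ∞ f) : ContDiff ℝ ∞ (md α f) := by
  rw [md_eq_pdList]
  exact contDiff_pdList _ hf

lemma support_pd_subset (i : Fin N) (f : RN N → E) : Function.support (pd i f) ⊆ tsupport f := by
  intro x hx
  by_contra hxf
  refine hx ?_
  simp [pd, (notMem_tsupport_iff_eventuallyEq.mp hxf).fderiv_eq]

lemma HasCompactSupport.md (α : Fin N → ℕ) (hf : HasCompactSupport f) :
    HasCompactSupport (md α f) := by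
  rw [md_eq_pdList]
  induction idxList α with
  | nil => exact hf
  | cons i L ih => exact ih.mono' (support_pd_subset i _)

lemma pd_sum {ι : Type*} (i : Fin N) (s : Finset ι) {f : ι → RN N → E}
    (hf : ∀ j ∈ s, ContDiff ℝ ∞ (f j)) :
    pd i (fun x => ∑ j ∈ s, f j x) = fun x => ∑ j ∈ s, pd i (f j) x := by
  ext x
  rw [pd, fderiv_fun_sum fun j hj => ((hf j hj).differentiable (by simp)) x,
    _root_.sum_apply]
  rfl

lemma md_sum {ι : Type*} (α : Fin N → ℕ) (s : Finset ι) {f : ι → RN N → E}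
    (hf : ∀ j ∈ s, ContDiff ℝ ∞ (f j)) :
    md α (fun x => ∑ j ∈ s, f j x) = fun x => ∑ j ∈ s, md α (f j) x := by
  simp only [md_eq_pdList]
  induction idxList α with
  | nil => rfl
  | cons i L ih =>
    change pd i (pdList L _) = _
    rw [ih, pd_sum i s fun j hj => contDiff_pdList L (hf j hj)]
    rfl

variable {R : Type*} [Semiring R] [Module R E] [SMulCommClass ℝ R E] [ContinuousConstSMul R E]

lemma pd_const_smul (i : Fin N) (k : R) (hf : ContDiff ℝ ∞ f) :
    pd i (fun x => k • f x) = fun x => k • pd i f x := by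
  ext x
  rw [pd, fderiv_fun_const_smul ((hf.differentiable (by simp)) x)]
  rfl

lemma md_const_smul (α : Fin N → ℕ) (k : R) (hf : ContDiff ℝ ∞ f) :
    md α (fun x => k • f x) = fun x => k • md α f x := by
  simp only [md_eq_pdList]
  induction idxList α with
  | nil => rfl
  | cons i L ih =>
    change pd i (pdList L _) = _
    rw [ih, pd_const_smul i k (contDiff_pdList L hf)]
    rfl

lemma pd_comp_smul_sub (i : Fin N) (r : ℝ) (b : RN N) (hg : ContDiff ℝ ∞ g) :
    pd i (fun x => g (r • (x - b))) = fun x => r • pd i g (r • (x - b)) := by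
  ext x
  have hinner : HasFDerivAt (fun x : RN N => r • (x - b)) (r • ContinuousLinearMap.id ℝ (RN N)) x :=
    ((hasFDerivAt_id x).sub_const b).const_smul r
  have hcomp : HasFDerivAt (fun x => g (r • (x - b)))
      ((fderiv ℝ g (r • (x - b))).comp (r • ContinuousLinearMap.id ℝ (RN N))) x :=
    (hg.differentiable (by simp) _).hasFDerivAt.comp x hinner
  rw [pd, pd, hcomp.fderiv]
  simp

lemma md_comp_smul_sub (α : Fin N → ℕ) (r : ℝ) (b : RN N) (hg : ContDiff ℝ ∞ g) :
    md α (fun x => g (r • (x - b))) = fun x => r ^ mOrder α • md α g (r • (x - b)) := by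
  simp only [md_eq_pdList, ← length_idxList]
  induction idxList α with
  | nil => simp [pdList]
  | cons i L ih =>
    have hL : ContDiff ℝ ∞ fun x : RN N => pdList L g (r • (x - b)) :=
      (contDiff_pdList L hg).comp ((contDiff_id.sub contDiff_const).const_smul r)
    change pd i (pdList L _) = _
    rw [ih, pd_const_smul i _ hL, pd_comp_smul_sub i r b (contDiff_pdList L hg)]
    ext x
    simp only [List.length_cons, pow_succ, mul_smul]
    rfl

lemma md_md_sum_mul {ι : Type*} (s : Finset ι) {a b : ι → RN N → ℂ}
    (ha : ∀ j ∈ s, ContDiff ℝ ∞ (a j)) (hb : ∀ j ∈ s, ContDiff ℝ ∞ (b j))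
    (α β : Fin N → ℕ) (x y : RN N) :
    md α (fun x' => md β (fun y' => ∑ j ∈ s, a j x' * b j y') y) x
      = ∑ j ∈ s, md α (a j) x * md β (b j) y := by
  have hinner : ∀ x', md β (fun y' => ∑ j ∈ s, a j x' * b j y')
      = fun y' => ∑ j ∈ s, a j x' * md β (b j) y' := fun x' => by
    change md β (fun y' => ∑ j ∈ s, a j x' • b j y') = _
    rw [md_sum β s fun j hj => (hb j hj).const_smul (a j x')]
    exact funext fun y' => Finset.sum_congr rfl fun j hj =>
      congrFun (md_const_smul β (a j x') (hb j hj)) y'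
  simp_rw [hinner, mul_comm (a _ _)]
  change md α (fun x' => ∑ j ∈ s, md β (b j) y • a j x') x = _
  rw [md_sum α s fun j hj => (ha j hj).const_smul (md β (b j) y)]
  exact Finset.sum_congr rfl fun j hj => by
    rw [mul_comm]; exact congrFun (md_const_smul α (md β (b j) y) (ha j hj)) x

end MultiDerivative

section Construction

variable {m : ℕ} {c : RN N} {ℓ : ℝ}

def rescale (c : RN N) (ℓ : ℝ) (x : RN N) : RN N := ℓ⁻¹ • (x - c)

lemma contDiff_rescale (c : RN N) (ℓ : ℝ) : ContDiff ℝ ∞ (rescale c ℓ) :=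
  (contDiff_id.sub contDiff_const).const_smul ℓ⁻¹

lemma rescale_mem_cube_zero_iff (hℓ : 0 < ℓ) {a : ℝ} {x : RN N} :
    rescale c ℓ x ∈ cube 0 a ↔ x ∈ cube c (a * ℓ) := by
  refine forall_congr' fun i => ?_
  change |ℓ⁻¹ * (x i - c i) - 0| ≤ a / 2 ↔ |x i - c i| ≤ a * ℓ / 2
  rw [sub_zero, abs_mul, abs_inv, abs_of_pos hℓ, inv_mul_le_iff₀ hℓ, mul_div_assoc, mul_comm]
  ring_nf

lemma integral_comp_rescale {E : Type*} [NormedAddCommGroup E] [NormedSpace ℝ E]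
    (c : RN N) (hℓ : 0 ≤ ℓ) (g : RN N → E) :
    ∫ x, g (rescale c ℓ x) = ℓ ^ N • ∫ z, g z := by
  rw [show (fun x => g (rescale c ℓ x)) = fun x => g (ℓ⁻¹ • (x - c)) from rfl,
    integral_sub_right_eq_self (fun x => g (ℓ⁻¹ • x)),
    Measure.integral_comp_inv_smul_of_nonneg volume g hℓ, finrank_euclideanSpace_fin]

def scaledMono (c : RN N) (ℓ : ℝ) (γ : Fin N → ℕ) (x : RN N) : ℂ :=
  monomialFn γ (rescale c ℓ x)

def scaledDual (m : ℕ) (c : RN N) (ℓ : ℝ) (γ : Fin N → ℕ) (y : RN N) : ℂ :=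
  (ℓ ^ N)⁻¹ • unitDual m γ (rescale c ℓ y)

def polyProjKernel (m : ℕ) (c : RN N) (ℓ : ℝ) (x y : RN N) : ℂ :=
  ∑ γ ∈ idxLe N (m - 1), scaledMono c ℓ γ x * scaledDual m c ℓ γ y

lemma isPolyDegLE_scaledMono {d : ℕ} (c : RN N) (ℓ : ℝ) {γ : Fin N → ℕ}
    (hγ : γ ∈ idxLe N d) : IsPolyDegLE N d (scaledMono c ℓ γ) := by
  have hrescale : scaledMono c ℓ γ = fun x => monomialFn γ (ℓ⁻¹ • x + -(ℓ⁻¹ • c)) :=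
    funext fun x => by rw [scaledMono, rescale, smul_sub, sub_eq_add_neg]
  rw [hrescale]
  exact (isPolyDegLE_monomialFn (mem_idxLe.mp hγ)).comp_smul_add ℓ⁻¹ (-(ℓ⁻¹ • c))

lemma contDiff_scaledMono (c : RN N) (ℓ : ℝ) (γ : Fin N → ℕ) :
    ContDiff ℝ ∞ (scaledMono c ℓ γ) :=
  (contDiff_monomialFn γ).comp (contDiff_rescale c ℓ)

lemma contDiff_scaledDual (m : ℕ) (c : RN N) (ℓ : ℝ) (γ : Fin N → ℕ) :
    ContDiff ℝ ∞ (scaledDual m c ℓ γ) :=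
  ((contDiff_unitDual m γ).comp (contDiff_rescale c ℓ)).const_smul _

lemma contDiff_polyProjKernel (m : ℕ) (c : RN N) (ℓ : ℝ) :
    ContDiff ℝ ∞ fun z : RN N × RN N => polyProjKernel m c ℓ z.1 z.2 :=
  ContDiff.sum fun γ _ => ((contDiff_scaledMono c ℓ γ).comp contDiff_fst).mul
    ((contDiff_scaledDual m c ℓ γ).comp contDiff_snd)

lemma mem_cube_of_scaledDual_ne_zero (hℓ : 0 < ℓ) {γ : Fin N → ℕ} {y : RN N}
    (hy : scaledDual m c ℓ γ y ≠ 0) : y ∈ cube c (ℓ / 2) := by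
  rw [div_eq_inv_mul, ← one_div, ← rescale_mem_cube_zero_iff hℓ]
  exact mem_cube_of_unitDual_ne_zero (right_ne_zero_of_smul hy)

lemma hasCompactSupport_scaledDual (hℓ : 0 < ℓ) (γ : Fin N → ℕ) :
    HasCompactSupport (scaledDual m c ℓ γ) :=
  .intro' (isCompact_cube c _) (isClosed_cube c _)
    fun _ hy => not_imp_comm.mp (mem_cube_of_scaledDual_ne_zero hℓ) hy

lemma tsupport_polyProjKernel_subset (hℓ : 0 < ℓ) (x : RN N) :
    tsupport (polyProjKernel m c ℓ x) ⊆ cube c (ℓ / 2) := by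
  refine closure_minimal (fun y hy => ?_) (isClosed_cube c _)
  obtain ⟨γ, -, hγ⟩ := Finset.exists_ne_zero_of_sum_ne_zero hy
  exact mem_cube_of_scaledDual_ne_zero hℓ (right_ne_zero_of_mul hγ)

lemma hasCompactSupport_polyProjKernel (hℓ : 0 < ℓ) (x : RN N) :
    HasCompactSupport (polyProjKernel m c ℓ x) :=
  (isCompact_cube c _).of_isClosed_subset (isClosed_tsupport _)
    (tsupport_polyProjKernel_subset hℓ x)

lemma integral_scaledMono_mul_scaledDual (hℓ : 0 < ℓ) {β : Fin N → ℕ} (hβ : ∀ i, β i < m)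
    (γ : Fin N → ℕ) :
    ∫ y, scaledMono c ℓ β y * scaledDual m c ℓ γ y = if β = γ then 1 else 0 := by
  simp_rw [scaledMono, scaledDual, mul_smul_comm]
  rw [integral_smul, integral_comp_rescale c hℓ.le fun z => monomialFn β z * unitDual m γ z,
    smul_smul, inv_mul_cancel₀ (pow_ne_zero N hℓ.ne'), one_smul,
    integral_monomialFn_mul_unitDual hβ]

lemma integral_scaledMono_mul_polyProjKernel (hm : 1 ≤ m) (hℓ : 0 < ℓ) {β : Fin N → ℕ}
    (hβ : β ∈ idxLe N (m - 1)) (x : RN N) :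
    ∫ y, scaledMono c ℓ β y * polyProjKernel m c ℓ x y = scaledMono c ℓ β x := by
  have hint : ∀ γ, Integrable fun y => scaledMono c ℓ β y * scaledDual m c ℓ γ y := fun γ =>
    Continuous.integrable_of_hasCompactSupport
      ((contDiff_scaledMono c ℓ β).continuous.mul (contDiff_scaledDual m c ℓ γ).continuous)
      (hasCompactSupport_scaledDual hℓ γ).mul_left
  have hβm : ∀ i, β i < m := fun i => by have := le_of_mem_idxLe hβ i; omega
  simp_rw [polyProjKernel, Finset.mul_sum, mul_left_comm (scaledMono c ℓ β _)]
  rw [integral_finsetSum _ fun γ _ => (hint γ).const_mul _]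
  simp_rw [integral_const_mul, integral_scaledMono_mul_scaledDual hℓ hβm, mul_ite, mul_one,
    mul_zero, Finset.sum_ite_eq, if_pos hβ]

lemma IsPolyDegLE.exists_eq_sum_scaledMono {d : ℕ} {P : RN N → ℂ} (hP : IsPolyDegLE N d P)
    (c : RN N) (hℓ : ℓ ≠ 0) :
    ∃ a : (Fin N → ℕ) → ℂ, ∀ x, P x = ∑ β ∈ idxLe N d, a β * scaledMono c ℓ β x := by
  obtain ⟨a, ha⟩ := hP.comp_smul_add ℓ c
  refine ⟨a, fun x => ?_⟩
  have hx := ha (rescale c ℓ x)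
  dsimp only at hx
  rw [rescale, smul_smul, mul_inv_cancel₀ hℓ, one_smul, sub_add_cancel] at hx
  simpa only [scaledMono, monomialFn, rescale] using hx

lemma integral_mul_polyProjKernel (hm : 1 ≤ m) (hℓ : 0 < ℓ) {P : RN N → ℂ}
    (hP : IsPolyDegLE N (m - 1) P) (x : RN N) :
    ∫ y, P y * polyProjKernel m c ℓ x y = P x := by
  obtain ⟨a, ha⟩ := hP.exists_eq_sum_scaledMono c hℓ.ne'
  have hint : ∀ β, Integrable fun y => scaledMono c ℓ β y * polyProjKernel m c ℓ x y := fun β =>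
    Continuous.integrable_of_hasCompactSupport
      ((contDiff_scaledMono c ℓ β).continuous.mul (continuous_finsetSum _ fun γ _ =>
        continuous_const.mul (contDiff_scaledDual m c ℓ γ).continuous))
      (hasCompactSupport_polyProjKernel hℓ x).mul_left
  simp_rw [ha, Finset.sum_mul, mul_assoc]
  rw [integral_finsetSum _ fun β _ => (hint β).const_mul _]
  exact Finset.sum_congr rfl fun β hβ => by
    rw [integral_const_mul, integral_scaledMono_mul_polyProjKernel hm hℓ hβ]

lemma isPolyDegLE_integral_mul_polyProjKernel {f : RN N → ℂ}
    (hf : IntegrableOn f (cube c ℓ)) :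
    IsPolyDegLE N (m - 1) fun x => ∫ y in cube c ℓ, f y * polyProjKernel m c ℓ x y := by
  have hint : ∀ γ, IntegrableOn (fun y => f y * scaledDual m c ℓ γ y) (cube c ℓ) := fun γ =>
    hf.mul_continuousOn (contDiff_scaledDual m c ℓ γ).continuous.continuousOn (isCompact_cube c ℓ)
  have hexpand : ∀ x, ∫ y in cube c ℓ, f y * polyProjKernel m c ℓ x y
      = ∑ γ ∈ idxLe N (m - 1), (∫ y in cube c ℓ, f y * scaledDual m c ℓ γ y) * scaledMono c ℓ γ x :=
    fun x => by
      simp_rw [polyProjKernel, Finset.mul_sum, mul_left_comm (f _)]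
      rw [integral_finsetSum _ fun γ _ => (hint γ).const_mul _]
      simp_rw [integral_const_mul, mul_comm]
  simp_rw [hexpand]
  exact .sum _ fun γ hγ => .const_mul _ (isPolyDegLE_scaledMono c ℓ hγ)

end Construction

section Estimates

lemma md_scaledMono (c : RN N) (ℓ : ℝ) (α γ : Fin N → ℕ) :
    md α (scaledMono c ℓ γ) = fun x => ℓ⁻¹ ^ mOrder α • md α (monomialFn γ) (rescale c ℓ x) :=
  md_comp_smul_sub α ℓ⁻¹ c (contDiff_monomialFn γ)

lemma md_scaledDual (m : ℕ) (c : RN N) (ℓ : ℝ) (β γ : Fin N → ℕ) :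
    md β (scaledDual m c ℓ γ)
      = fun y => ((ℓ ^ N)⁻¹ * ℓ⁻¹ ^ mOrder β) • md β (unitDual m γ) (rescale c ℓ y) := by
  have hcomp : ContDiff ℝ ∞ fun y => unitDual m γ (ℓ⁻¹ • (y - c)) :=
    (contDiff_unitDual m γ).comp (contDiff_rescale c ℓ)
  change md β (fun y => (ℓ ^ N)⁻¹ • unitDual m γ (ℓ⁻¹ • (y - c))) = _
  rw [md_const_smul β _ hcomp, md_comp_smul_sub β ℓ⁻¹ c (contDiff_unitDual m γ)]
  simp only [smul_smul]
  rfl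

lemma exists_bound_md_polyProjKernel (m : ℕ) (a : ℝ) (α β : Fin N → ℕ) :
    ∃ C > 0, ∀ (c : RN N) (ℓ : ℝ), 0 < ℓ → ∀ x ∈ cube c (a * ℓ), ∀ y : RN N,
      ‖md α (fun x' => md β (fun y' => polyProjKernel m c ℓ x' y') y) x‖ ≤
        C / ℓ ^ (N + mOrder α + mOrder β) := by
  choose B₁ hB₁ using fun γ => (isCompact_cube (0 : RN N) a).exists_bound_of_continuousOn
    (contDiff_md α (contDiff_monomialFn γ)).continuous.continuousOn
  choose B₂ hB₂ using fun γ => ((hasCompactSupport_unitDual m γ).md β).exists_bound_of_continuous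
    (contDiff_md β (contDiff_unitDual m γ)).continuous
  refine ⟨max (∑ γ ∈ idxLe N (m - 1), B₁ γ * B₂ γ) 1, lt_max_of_lt_right one_pos,
    fun c ℓ hℓ x hx y => ?_⟩
  have hB₁x : ∀ γ, ‖md α (monomialFn γ) (rescale c ℓ x)‖ ≤ B₁ γ := fun γ =>
    hB₁ γ _ ((rescale_mem_cube_zero_iff hℓ).mpr hx)
  rw [show (fun x' => md β (fun y' => polyProjKernel m c ℓ x' y') y) =
      fun x' => md β (fun y' => ∑ γ ∈ idxLe N (m - 1),
        scaledMono c ℓ γ x' * scaledDual m c ℓ γ y') y from rfl,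
    md_md_sum_mul _ (fun γ _ => contDiff_scaledMono c ℓ γ) (fun γ _ => contDiff_scaledDual m c ℓ γ)]
  calc ‖∑ γ ∈ idxLe N (m - 1), md α (scaledMono c ℓ γ) x * md β (scaledDual m c ℓ γ) y‖
      ≤ ∑ γ ∈ idxLe N (m - 1), (ℓ⁻¹ ^ mOrder α * B₁ γ) * ((ℓ ^ N)⁻¹ * ℓ⁻¹ ^ mOrder β * B₂ γ) := by
        refine norm_sum_le_of_le _ fun γ _ => ?_
        rw [norm_mul, md_scaledMono, md_scaledDual, norm_smul, norm_smul, Real.norm_of_nonneg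
          (by positivity), Real.norm_of_nonneg (by positivity)]
        exact mul_le_mul (mul_le_mul_of_nonneg_left (hB₁x γ) (by positivity))
          (mul_le_mul_of_nonneg_left (hB₂ γ _) (by positivity)) (by positivity)
          ((by positivity : (0 : ℝ) ≤ ℓ⁻¹ ^ mOrder α * ‖_‖).trans
            (mul_le_mul_of_nonneg_left (hB₁x γ) (by positivity)))
    _ = (∑ γ ∈ idxLe N (m - 1), B₁ γ * B₂ γ) / ℓ ^ (N + mOrder α + mOrder β) := by
        rw [Finset.sum_div]
        refine Finset.sum_congr rfl fun γ _ => ?_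
        rw [pow_add, pow_add, inv_pow, inv_pow]
        field_simp
    _ ≤ max (∑ γ ∈ idxLe N (m - 1), B₁ γ * B₂ γ) 1 / ℓ ^ (N + mOrder α + mOrder β) := by
        gcongr
        exact le_max_left _ _

end Estimates

theorem statement2_general (N m : ℕ) (hm : 1 ≤ m) :
    ∃ C : ℝ → (Fin N → ℕ) → (Fin N → ℕ) → ℝ,
      (∀ a α β, 0 < C a α β) ∧
      ∀ (xQ : RN N) (ℓ : ℝ), 0 < ℓ →
        ∃ φQ : RN N → RN N → ℂ,
          ContDiff ℝ (⊤ : ℕ∞) (fun z : RN N × RN N => φQ z.1 z.2) ∧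
          (∀ x, tsupport (φQ x) ⊆ openCube xQ ℓ) ∧
          (∀ f : RN N → ℂ, IntegrableOn f (cube xQ ℓ) →
            IsPolyDegLE N (m - 1) fun x => ∫ y in cube xQ ℓ, f y * φQ x y) ∧
          (∀ P : RN N → ℂ, IsPolyDegLE N (m - 1) P → ∀ x, P x = ∫ y, P y * φQ x y) ∧
          (∀ a : ℝ, 0 < a → ∀ α β : Fin N → ℕ, ∀ x ∈ cube xQ (a * ℓ), ∀ y : RN N,
            ‖md α (fun x' => md β (fun y' => φQ x' y') y) x‖ ≤
              C a α β / ℓ ^ (N + mOrder α + mOrder β)) := by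
  choose C hC₀ hC using exists_bound_md_polyProjKernel (N := N) m
  refine ⟨C, hC₀, fun xQ ℓ hℓ => ⟨polyProjKernel m xQ ℓ, contDiff_polyProjKernel m xQ ℓ,
    fun x => (tsupport_polyProjKernel_subset hℓ x).trans (cube_half_subset_openCube xQ hℓ),
    fun f hf => isPolyDegLE_integral_mul_polyProjKernel hf,
    fun P hP x => (integral_mul_polyProjKernel hm hℓ hP x).symm,
    fun a _ α β x hx y => hC a α β xQ ℓ hℓ x hx y⟩⟩

/-- Miyachi's construction of local polynomial projections (Lemma 4 of Miyachi). -/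
theorem statement2 (N m : ℕ) (hN : 1 ≤ N) (hm : 1 ≤ m) :
    ∃ C : ℝ → (Fin N → ℕ) → (Fin N → ℕ) → ℝ,
      (∀ a α β, 0 < C a α β) ∧
      ∀ (xQ : RN N) (ℓ : ℝ), 0 < ℓ →
        ∃ φQ : RN N → RN N → ℂ,
          ContDiff ℝ (⊤ : ℕ∞) (fun z : RN N × RN N => φQ z.1 z.2) ∧
          (∀ x, tsupport (φQ x) ⊆ openCube xQ ℓ) ∧
          (∀ f : RN N → ℂ, IntegrableOn f (cube xQ ℓ) →
            IsPolyDegLE N (m - 1) fun x => ∫ y in cube xQ ℓ, f y * φQ x y) ∧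
          (∀ P : RN N → ℂ, IsPolyDegLE N (m - 1) P → ∀ x, P x = ∫ y, P y * φQ x y) ∧
          (∀ a : ℝ, 0 < a → ∀ α β : Fin N → ℕ, ∀ x ∈ cube xQ (a * ℓ), ∀ y : RN N,
            ‖md α (fun x' => md β (fun y' => φQ x' y') y) x‖ ≤
              C a α β / ℓ ^ (N + mOrder α + mOrder β)) :=
  statement2_general N m hm
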